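/- Let Z₀_V, Z₀_W solve the system Z₀_V⁻¹ = (1 − 2g·A_V)/(1 + c·Z₀_W·A_W) and the symmetric companion equation, derived from 2g₁ᴿ Z₀_V A_V + c₁ᴿ Z₀_W A_W = Z₀_V − 1 and 2g₂ᴿ Z₀_W A_W + c₁ᴿ Z₀_V A_V = Z₀_W − 1. If A_V = A_W = A → ∞ (logarithmic divergence) and 4g₁ᴿg₂ᴿ ≠ (c₁ᴿ)², then both Z₀_V and Z₀_W tend to 0 as A → ∞, with Z₀_I = O(1/A). -/
import Mathlib


open Filter Asymptotics

private lemma key_bigO (k m n : ℝ) (hk : k ≠ 0) (Z : ℝ → ℝ)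
    (h : ∀ᶠ A in atTop, (k * A ^ 2 + m * A + 1) * Z A = n * A + 1) :
    Z =O[atTop] (fun A => 1 / A) := by
  set D : ℝ → ℝ := fun A => k * A ^ 2 + m * A + 1 with hDdef
  have hinv : Tendsto (fun A : ℝ => A⁻¹) atTop (nhds 0) := tendsto_inv_atTop_zero
  have hD : Tendsto (fun A : ℝ => D A / A ^ 2) atTop (nhds k) := by
    have heq : ∀ᶠ A : ℝ in atTop, k + m * A⁻¹ + (A⁻¹) ^ 2 = D A / A ^ 2 := by
      filter_upwards [eventually_gt_atTop 0] with A hA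
      have hA' : A ≠ 0 := ne_of_gt hA
      field_simp [hDdef]
      ring
    have hck : Tendsto (fun _ : ℝ => k) atTop (nhds k) := tendsto_const_nhds
    have hcm : Tendsto (fun _ : ℝ => m) atTop (nhds m) := tendsto_const_nhds
    have hlim : Tendsto (fun A : ℝ => k + m * A⁻¹ + (A⁻¹) ^ 2) atTop (nhds k) := by
      have := (hck.add (hcm.mul hinv)).add (hinv.pow 2)
      simpa using this
    exact hlim.congr' heq
  have hInv : Tendsto (fun A : ℝ => A ^ 2 / D A) atTop (nhds k⁻¹) := by
    have := hD.inv₀ hk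
    simpa [inv_div] using this
  have hDne : ∀ᶠ A : ℝ in atTop, D A ≠ 0 := by
    filter_upwards [hInv.eventually_ne (inv_ne_zero hk)] with A hA
    intro h0
    apply hA
    rw [h0, div_zero]
  have hN : Tendsto (fun A : ℝ => (n * A + 1) / A) atTop (nhds n) := by
    have heq : ∀ᶠ A : ℝ in atTop, n + A⁻¹ = (n * A + 1) / A := by
      filter_upwards [eventually_gt_atTop 0] with A hA
      have hA' : A ≠ 0 := ne_of_gt hA
      field_simp
    have hcn : Tendsto (fun _ : ℝ => n) atTop (nhds n) := tendsto_const_nhds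
    have hlim : Tendsto (fun A : ℝ => n + A⁻¹) atTop (nhds n) := by
      simpa using hcn.add hinv
    exact hlim.congr' heq
  have hZA : Tendsto (fun A => Z A * A) atTop (nhds (n * k⁻¹)) := by
    refine (hN.mul hInv).congr' ?_
    filter_upwards [h, hDne, eventually_gt_atTop 0] with A hA hD0 hApos
    have hA' : A ≠ 0 := ne_of_gt hApos
    rw [← hA]
    field_simp
    ring
  have h1 : (fun A => Z A * A) =O[atTop] (fun _ : ℝ => (1 : ℝ)) := hZA.isBigO_one ℝ
  have h2 := h1.mul (isBigO_refl (fun A : ℝ => 1 / A) atTop)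
  refine h2.congr' ?_ ?_
  · filter_upwards [eventually_ne_atTop (0 : ℝ)] with A hA
    field_simp
  · filter_upwards with A
    simp

/-- if the bare wave functions Z₀_V(A), Z₀_W(A) satisfy
    2g₁ᴿ Z₀_V A + c₁ᴿ Z₀_W A = Z₀_V − 1 and 2g₂ᴿ Z₀_W A + c₁ᴿ Z₀_V A = Z₀_W − 1
    for large A, and 4g₁ᴿg₂ᴿ ≠ (c₁ᴿ)², then Z₀_V, Z₀_W → 0 as A → ∞, with
    Z₀_I = O(1/A). -/
theorem bare_wave_function_vanishes (g₁ g₂ c : ℝ) (hsing : 4 * g₁ * g₂ ≠ c ^ 2)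
    (ZV ZW : ℝ → ℝ)
    (hV : ∀ᶠ A in atTop, 2 * g₁ * ZV A * A + c * ZW A * A = ZV A - 1)
    (hW : ∀ᶠ A in atTop, 2 * g₂ * ZW A * A + c * ZV A * A = ZW A - 1) :
    Tendsto ZV atTop (nhds 0) ∧ Tendsto ZW atTop (nhds 0) ∧
    ZV =O[atTop] (fun A => 1 / A) ∧ ZW =O[atTop] (fun A => 1 / A) := by
  have hk : 4 * g₁ * g₂ - c ^ 2 ≠ 0 := sub_ne_zero.mpr hsing
  have hOV : ZV =O[atTop] (fun A => 1 / A) := by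
    refine key_bigO (4 * g₁ * g₂ - c ^ 2) (-(2 * (g₁ + g₂))) (c - 2 * g₂) hk ZV ?_
    filter_upwards [hV, hW] with A h1 h2
    linear_combination (2 * g₂ * A - 1) * h1 - c * A * h2
  have hOW : ZW =O[atTop] (fun A => 1 / A) := by
    refine key_bigO (4 * g₁ * g₂ - c ^ 2) (-(2 * (g₁ + g₂))) (c - 2 * g₁) hk ZW ?_
    filter_upwards [hV, hW] with A h1 h2
    linear_combination (2 * g₁ * A - 1) * h2 - c * A * h1
  have hinv : Tendsto (fun A : ℝ => A⁻¹) atTop (nhds 0) := tendsto_inv_atTop_zero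
  have hdiv : Tendsto (fun A : ℝ => 1 / A) atTop (nhds 0) := by
    simpa [one_div] using hinv
  exact ⟨hOV.trans_tendsto hdiv, hOW.trans_tendsto hdiv, hOV, hOW⟩
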